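/- arXiv:2011.14434 — 4 statements merged into one kernel-verified Lean document; each statement's English description precedes it below -/
import Mathlib

section
/- Let A be a weakly monotone allocation, t an input, i a player, S a subset of the tasks allocated to player i at t, and S' a subset of tasks allocated to other players at t. If t' = (t'_i, t_{-i}) satisfies t'_{ij} < t_{ij} for all j ∈ S, t'_{ij} > t_{ij} for all j ∈ S', and t'_{ij} = t_{ij} for all other tasks j, then for every task j ∈ S ∪ S', task j is allocated to player i at t' if and only if it is allocated to player i at t (i.e., all tasks in S remain allocated to i and no task in S' becomes allocated to i). -/
/-- Weak monotonicity tool: lowering player `i`'s values on a set `S` of tasks it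
receives and raising them on a set `S'` of tasks it does not receive leaves the
allocation of player `i` on `S ∪ S'` unchanged. -/
theorem stmt_1 {ι M : Type*} [Fintype M] [DecidableEq ι]
    (A : (ι → M → ℝ) → M → ι)
    (hWMON : ∀ (i : ι) (t t' : ι → M → ℝ), (∀ k, k ≠ i → t k = t' k) →
      ∑ j : M, (((if A t' j = i then (1:ℝ) else 0) - (if A t j = i then 1 else 0)) *
        (t' i j - t i j)) ≤ 0)
    (i : ι) (t t' : ι → M → ℝ) (S S' : Finset M)
    (hS : ∀ j ∈ S, A t j = i) (hS' : ∀ j ∈ S', A t j ≠ i)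
    (hdec : ∀ j ∈ S, t' i j < t i j)
    (hinc : ∀ j ∈ S', t i j < t' i j)
    (hfix : ∀ j, j ∉ S → j ∉ S' → t' i j = t i j)
    (hoth : ∀ k, k ≠ i → t' k = t k) :
    (∀ j ∈ S, A t' j = i) ∧ (∀ j ∈ S', A t' j ≠ i) := by
  set f : M → ℝ := fun j =>
    ((if A t' j = i then (1:ℝ) else 0) - (if A t j = i then 1 else 0)) *
      (t' i j - t i j) with hf
  have hle : ∑ j : M, f j ≤ 0 := hWMON i t t' (fun k hk => (hoth k hk).symm)
  have hnn : ∀ j ∈ Finset.univ, 0 ≤ f j := by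
    intro j _
    by_cases hjS : j ∈ S
    · have h1 : A t j = i := hS j hjS
      have h2 : t' i j - t i j < 0 := sub_neg.mpr (hdec j hjS)
      by_cases h3 : A t' j = i
      · simp [hf, h1, h3]
      · simp [hf, h1, h3]
        nlinarith
    · by_cases hjS' : j ∈ S'
      · have h1 : A t j ≠ i := hS' j hjS'
        have h2 : 0 < t' i j - t i j := sub_pos.mpr (hinc j hjS')
        by_cases h3 : A t' j = i
        · simp [hf, h1, h3]
          nlinarith
        · simp [hf, h1, h3]
      · simp [hf, hfix j hjS hjS']
  have hzero : ∀ j ∈ Finset.univ, f j = 0 := by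
    rw [← Finset.sum_eq_zero_iff_of_nonneg hnn]
    exact le_antisymm hle (Finset.sum_nonneg hnn)
  constructor
  · intro j hj
    by_contra h3
    have h1 : A t j = i := hS j hj
    have h2 : t' i j - t i j < 0 := sub_neg.mpr (hdec j hj)
    have := hzero j (Finset.mem_univ j)
    simp [hf, h1, h3] at this
    nlinarith
  · intro j hj h3
    have h1 : A t j ≠ i := hS' j hj
    have h2 : 0 < t' i j - t i j := sub_pos.mpr (hinc j hj)
    have := hzero j (Finset.mem_univ j)
    simp [hf, h1, h3] at this
    nlinarith
end

section
/- For a weakly monotone allocation of tasks among players, the boundary function ψ_r for a single task r is 1-Lipschitz in the other t-values with respect to the ℓ1 norm: |ψ_r(t_{-r}, s) − ψ_r(t'_{-r}, s)| ≤ ‖t_{-r} − t'_{-r}‖₁. -/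
/-- For a weakly monotone allocation (of player 0, other players' values fixed),
the boundary function `ψ` for a task `r` is 1-Lipschitz in the other coordinates
with respect to the ℓ1 norm. -/
theorem stmt_2 {M : Type*} [Fintype M] [DecidableEq M]
    (a : (M → ℝ) → M → Bool)
    (hWMON : ∀ t t' : M → ℝ,
      ∑ j : M, (((if a t j then (1:ℝ) else 0) - (if a t' j then 1 else 0)) *
        (t j - t' j)) ≤ 0)
    (r : M) (ψ : (M → ℝ) → ℝ)
    (hψ_indep : ∀ (t : M → ℝ) (x : ℝ), ψ (Function.update t r x) = ψ t)
    (hbelow : ∀ t : M → ℝ, t r < ψ t → a t r = true)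
    (habove : ∀ t : M → ℝ, ψ t < t r → a t r = false) :
    ∀ t t' : M → ℝ, |ψ t - ψ t'| ≤ ∑ j ∈ Finset.univ.erase r, |t j - t' j| := by
  have key : ∀ t t' : M → ℝ, ψ t - ψ t' ≤ ∑ j ∈ Finset.univ.erase r, |t j - t' j| := by
    intro t t'
    by_contra h
    push_neg at h
    set D := ∑ j ∈ Finset.univ.erase r, |t j - t' j| with hD
    have hgap : 0 < ψ t - ψ t' - D := by linarith
    set ε := (ψ t - ψ t' - D) / 3 with hε
    have hεpos : 0 < ε := by positivity
    set u := Function.update t r (ψ t - ε) with hu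
    set u' := Function.update t' r (ψ t' + ε) with hu'
    have hψu : ψ u = ψ t := hψ_indep t _
    have hψu' : ψ u' = ψ t' := hψ_indep t' _
    have hur : u r = ψ t - ε := Function.update_self r _ t
    have hu'r : u' r = ψ t' + ε := Function.update_self r _ t'
    have hau : a u r = true := hbelow u (by rw [hψu, hur]; linarith)
    have hau' : a u' r = false := habove u' (by rw [hψu', hu'r]; linarith)
    have hw := hWMON u u'
    rw [← Finset.sum_erase_add _ _ (Finset.mem_univ r)] at hw
    have hr : ((if a u r then (1:ℝ) else 0) - if a u' r then 1 else 0) * (u r - u' r)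
        = (ψ t - ε) - (ψ t' + ε) := by
      rw [hau, hau', hur, hu'r]; simp
    have hbound : ∀ j ∈ Finset.univ.erase r,
        -|t j - t' j| ≤ ((if a u j then (1:ℝ) else 0) - if a u' j then 1 else 0) * (u j - u' j) := by
      intro j hj
      have hjr : j ≠ r := Finset.ne_of_mem_erase hj
      have huj : u j = t j := Function.update_of_ne hjr _ _
      have hu'j : u' j = t' j := Function.update_of_ne hjr _ _
      rw [huj, hu'j]
      have habs : |((if a u j then (1:ℝ) else 0) - if a u' j then 1 else 0) * (t j - t' j)|
          ≤ |t j - t' j| := by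
        rw [abs_mul]
        have h1 : |(if a u j then (1:ℝ) else 0) - if a u' j then 1 else 0| ≤ 1 := by
          split_ifs <;> norm_num
        nlinarith [abs_nonneg (t j - t' j)]
      have := neg_abs_le (((if a u j then (1:ℝ) else 0) - if a u' j then 1 else 0) * (t j - t' j))
      linarith
    have hsum : -D ≤ ∑ j ∈ Finset.univ.erase r,
        ((if a u j then (1:ℝ) else 0) - if a u' j then 1 else 0) * (u j - u' j) := by
      have : ∑ j ∈ Finset.univ.erase r, -|t j - t' j| = -D := by
        rw [hD, ← Finset.sum_neg_distrib]
      rw [← this]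
      exact Finset.sum_le_sum hbound
    rw [hr] at hw
    linarith
  intro t t'
  have h1 := key t t'
  have h2 := key t' t
  have hsym : ∑ j ∈ Finset.univ.erase r, |t' j - t j| = ∑ j ∈ Finset.univ.erase r, |t j - t' j| :=
    Finset.sum_congr rfl fun j _ => abs_sub_comm _ _
  rw [hsym] at h2
  exact abs_sub_le_iff.mpr ⟨h1, h2⟩
end

section
/- Let f, g : ℝ → ℝ be truncated linear functions f(x) = max(0, λ₁x − γ₁) and g(x) = max(0, λ₂x − γ₂) with λ₁, λ₂ > 0. Suppose a function Ψ(x, y) of two arguments satisfies: Ψ(·, y) is 1-Lipschitz in y (|Ψ(x,y) − Ψ(x,y')| ≤ |y − y'|), Ψ(x, α') = f(x) and Ψ(x, α'') = g(x) for all x in a neighborhood of 1 where f(x), g(x) > 0, with α' < α''. If moreover g(1) − f(1) = −(α'' − α'), then λ₁ = λ₂. -/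
/-- Two parallel truncated-linear slices of a 1-Lipschitz boundary whose values
at `1` differ by exactly `-(α'' - α')` must have the same slope. -/
theorem stmt_3 (lam1 lam2 gam1 gam2 alpha' alpha'' eps : ℝ)
    (hl1 : 0 < lam1) (hl2 : 0 < lam2) (hab : alpha' < alpha'') (heps : 0 < eps)
    (Psi : ℝ → ℝ → ℝ)
    (hLip : ∀ x y y', |Psi x y - Psi x y'| ≤ |y - y'|)
    (hpos : ∀ x ∈ Set.Ioo (1 - eps) (1 + eps),
      0 < lam1 * x - gam1 ∧ 0 < lam2 * x - gam2)
    (heqf : ∀ x ∈ Set.Ioo (1 - eps) (1 + eps), Psi x alpha' = max 0 (lam1 * x - gam1))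
    (heqg : ∀ x ∈ Set.Ioo (1 - eps) (1 + eps), Psi x alpha'' = max 0 (lam2 * x - gam2))
    (hdiff : max 0 (lam2 * 1 - gam2) - max 0 (lam1 * 1 - gam1) = -(alpha'' - alpha')) :
    lam1 = lam2 := by
  -- key: for x in interval, (lam2*x-gam2) - (lam1*x-gam1) ≥ -(alpha''-alpha')
  have key : ∀ x ∈ Set.Ioo (1 - eps) (1 + eps),
      (lam2 * x - gam2) - (lam1 * x - gam1) ≥ -(alpha'' - alpha') := by
    intro x hx
    have h1 := (hpos x hx).1
    have h2 := (hpos x hx).2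
    have hf := heqf x hx
    have hg := heqg x hx
    rw [max_eq_right h1.le] at hf
    rw [max_eq_right h2.le] at hg
    have := hLip x alpha'' alpha'
    rw [hf, hg] at this
    have habs : |alpha'' - alpha'| = alpha'' - alpha' := abs_of_pos (by linarith)
    rw [habs] at this
    have := abs_le.mp this
    linarith [this.1]
  have h1 : (1:ℝ) ∈ Set.Ioo (1 - eps) (1 + eps) := by constructor <;> linarith
  have hpos1 := hpos 1 h1
  rw [max_eq_right hpos1.1.le, max_eq_right hpos1.2.le] at hdiff
  have hp : (1 + eps/2 : ℝ) ∈ Set.Ioo (1 - eps) (1 + eps) := by constructor <;> linarith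
  have hm : (1 - eps/2 : ℝ) ∈ Set.Ioo (1 - eps) (1 + eps) := by constructor <;> linarith
  have kp := key _ hp
  have km := key _ hm
  nlinarith [kp, km, hdiff]
end

section
/- Let n ≥ 2 and λ = √(n−1). Suppose nonnegative reals r_i, l_i, r*_i, l*_i for i ∈ [n−1] satisfy λ r_i + l_i ≤ λ r*_i + l*_i for every i. Let MECH = max(∑_i r_i, max_i l_i) and OPT = max(∑_i r*_i, max_i l*_i). Then MECH ≤ (1 + √(n−1)) · OPT. -/
/-- Weighted VCG analysis: if `λ = √(n-1)` and `λ r_i + l_i ≤ λ r*_i + l*_i` for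
every cluster `i`, then the mechanism's makespan is at most `(1+√(n-1))` times the
optimal makespan. -/
theorem stmt_11 (n : ℕ) (hn : 2 ≤ n) (r l rs ls : Fin (n-1) → ℝ)
    (hr : ∀ i, 0 ≤ r i) (hl : ∀ i, 0 ≤ l i) (hrs : ∀ i, 0 ≤ rs i) (hls : ∀ i, 0 ≤ ls i)
    (hmin : ∀ i, Real.sqrt ((n:ℝ) - 1) * r i + l i ≤ Real.sqrt ((n:ℝ) - 1) * rs i + ls i) :
    max (∑ i, r i) (⨆ i, l i) ≤
      (1 + Real.sqrt ((n:ℝ) - 1)) * max (∑ i, rs i) (⨆ i, ls i) := by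
  set L : ℝ := Real.sqrt ((n:ℝ) - 1) with hL
  have hn1 : (1:ℝ) ≤ (n:ℝ) - 1 := by
    have : (2:ℝ) ≤ (n:ℝ) := by exact_mod_cast hn
    linarith
  have hL1 : 1 ≤ L := by
    rw [hL]
    calc (1:ℝ) = Real.sqrt 1 := by simp
      _ ≤ Real.sqrt ((n:ℝ) - 1) := Real.sqrt_le_sqrt hn1
  have hLpos : 0 < L := lt_of_lt_of_le one_pos hL1
  have hLsq : L * L = (n:ℝ) - 1 := Real.mul_self_sqrt (by linarith)
  have hne : Nonempty (Fin (n-1)) := ⟨⟨0, by omega⟩⟩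
  set OPT : ℝ := max (∑ i, rs i) (⨆ i, ls i) with hOPT
  have hOPT0 : 0 ≤ OPT := le_trans (Finset.sum_nonneg fun i _ => hrs i) (le_max_left _ _)
  have hls_le : ∀ i, ls i ≤ OPT := fun i =>
    le_trans (le_ciSup (Set.Finite.bddAbove (Set.finite_range ls)) i) (le_max_right _ _)
  have hrs_le : ∀ i, rs i ≤ OPT := fun i =>
    le_trans (Finset.single_le_sum (fun j _ => hrs j) (Finset.mem_univ i)) (le_max_left _ _)
  apply max_le
  · -- sum bound
    have h1 : ∀ i, r i ≤ rs i + ls i / L := by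
      intro i
      have hm := hmin i
      have hli := hl i
      have h2 : L * r i ≤ L * (rs i + ls i / L) := by
        rw [mul_add, mul_div_cancel₀ _ hLpos.ne']
        linarith
      exact le_of_mul_le_mul_left h2 hLpos
    have hsum : ∑ i, ls i ≤ ((n:ℝ) - 1) * OPT := by
      calc ∑ i, ls i ≤ ∑ _i : Fin (n-1), OPT :=
            Finset.sum_le_sum (fun i _ => hls_le i)
        _ = ((n-1 : ℕ) : ℝ) * OPT := by simp [mul_comm]
        _ = ((n:ℝ) - 1) * OPT := by
            congr 1
            have h1n : (1:ℕ) ≤ n := by omega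
            push_cast [Nat.cast_sub h1n]
            ring
    calc ∑ i, r i ≤ ∑ i, (rs i + ls i / L) := Finset.sum_le_sum (fun i _ => h1 i)
      _ = ∑ i, rs i + (∑ i, ls i) / L := by
          rw [Finset.sum_add_distrib, Finset.sum_div]
      _ ≤ OPT + ((n:ℝ) - 1) * OPT / L := by
          gcongr
          exact le_max_left _ _
      _ = (1 + L) * OPT := by
          rw [← hLsq]; field_simp
  · apply ciSup_le
    intro i
    have hm := hmin i
    calc l i ≤ L * rs i + ls i := by nlinarith [mul_nonneg hLpos.le (hr i)]
      _ ≤ L * OPT + OPT := by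
          have h3 := hrs_le i
          have h4 := hls_le i
          nlinarith
      _ = (1 + L) * OPT := by ring
end
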